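/- arXiv:1909.07555 — 2 statements merged into one kernel-verified Lean document; each statement's English description precedes it below -/
import Mathlib

section
/- Let (G, H) be a complex unit gain graph whose underlying simple graph G is connected. Then for every proper subset V₀ of the vertex set such that G − V₀ is acyclic (a forest), 2m(G − V₀) ≤ rank(H); and rank(H) ≤ 2m(G) + b(G), where b(G) is the minimum cardinality |S| over subsets S of the vertex set such that G − S is bipartite. -/
/-- `(G, H)` is a complex unit gain graph: `H` is Hermitian, entries of adjacent pairs
have modulus `1`, and entries of non-adjacent pairs (including the diagonal) vanish. -/
def IsUnitGain {V : Type*} (G : SimpleGraph V) (H : Matrix V V ℂ) : Prop :=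
  H.IsHermitian ∧ (∀ i j, G.Adj i j → ‖H i j‖ = 1) ∧
    ∀ i j, ¬ G.Adj i j → H i j = 0

/-- The matching number of a simple graph: the maximum size of a matching. -/
noncomputable def matchNum {V : Type*} (G : SimpleGraph V) : ℕ :=
  sSup {n : ℕ | ∃ M : G.Subgraph, M.IsMatching ∧ M.edgeSet.ncard = n}

/-- The cyclomatic number `c(G) = |E(G)| - |V| + ω(G)` of a simple graph. -/
noncomputable def cycNum {V : Type*} (G : SimpleGraph V) : ℤ :=
  (G.edgeSet.ncard : ℤ) - (Nat.card V : ℤ) + (Nat.card G.ConnectedComponent : ℤ)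

/-- The gain of a walk: the product of the matrix entries along its darts. -/
noncomputable def gain {V : Type*} {G : SimpleGraph V} (H : Matrix V V ℂ) {u v : V}
    (w : G.Walk u v) : ℂ :=
  (w.darts.map fun d => H d.toProd.1 d.toProd.2).prod

/-- The set of vertices of `G` lying on some cycle. -/
def cycVerts {V : Type*} (G : SimpleGraph V) : Set V :=
  {u | ∃ (x : V) (w : G.Walk x x), w.IsCycle ∧ u ∈ w.support}

/-- `u` and `v` lie on a common cycle of `G`. -/
def cycleRel {V : Type*} (G : SimpleGraph V) (u v : V) : Prop :=
  ∃ (x : V) (w : G.Walk x x), w.IsCycle ∧ u ∈ w.support ∧ v ∈ w.support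

/-- The setoid generated by "lying on a common cycle". -/
def contractSetoid {V : Type*} (G : SimpleGraph V) : Setoid V :=
  Relation.EqvGen.setoid (cycleRel G)

/-- `T_G`: the graph obtained from `G` by contracting each cycle into a single vertex. -/
def TG {V : Type*} (G : SimpleGraph V) : SimpleGraph (Quotient (contractSetoid G)) where
  Adj a b := a ≠ b ∧ ∃ u v : V, Quotient.mk (contractSetoid G) u = a ∧
      Quotient.mk (contractSetoid G) v = b ∧ G.Adj u v
  symm := ⟨fun a b ⟨hne, u, v, hu, hv, hadj⟩ => ⟨hne.symm, v, u, hv, hu, hadj.symm⟩⟩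
  loopless := ⟨fun a ⟨hne, _⟩ => hne rfl⟩

/-- The rank of the principal submatrix of `H` indexed by a set `s` of vertices. -/
noncomputable def rankOn {V : Type*} [Fintype V] (H : Matrix V V ℂ) (s : Set V) : ℕ :=
  letI : Fintype s := (Set.toFinite s).fintype
  (H.submatrix (Subtype.val : s → V) (Subtype.val : s → V)).rank

/-- The cycles of `G` are pairwise vertex-disjoint: any two cycles sharing a
vertex have the same edges. -/
def cyclesDisjoint {V : Type*} (G : SimpleGraph V) : Prop :=
  ∀ ⦃x y : V⦄ (c₁ : G.Walk x x) (c₂ : G.Walk y y), c₁.IsCycle → c₂.IsCycle →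
    (∃ u, u ∈ c₁.support ∧ u ∈ c₂.support) → ∀ e, e ∈ c₁.edges ↔ e ∈ c₂.edges

/-- `b(G)`: the minimum cardinality of a set `S` of vertices such that `G - S` is
bipartite (i.e. `2`-colorable). -/
noncomputable def bipNum {V : Type*} (G : SimpleGraph V) : ℕ :=
  sInf {n : ℕ | ∃ S : Set V, S.ncard = n ∧ (G.induce Sᶜ).Colorable 2}

/-!
Lower bound: a maximum matching of the forest `F = G - V₀` picks out a principal submatrix
of `H`, indexed by the `2k` matched vertices, whose Leibniz expansion only has terms indexed by
permutations moving every vertex along an edge of `F`. In a forest such a permutation has no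
orbit of length `≥ 3`, so it is a fixed-point-free involution, and its term is
`(-1)^k ∏ |h_uv|² = (-1)^k`. All nonzero terms are equal and the matching supplies one, so
the submatrix is nonsingular and `2 m(G - V₀) ≤ rank H`.

Upper bound: `rank H` is at most the largest number of nonzero entries of `H` in distinct rows
and columns, since a nonsingular `rank H × rank H` minor has a nonzero diagonal up to a
permutation. Such entries are edges `u → v` of `G` with distinct tails and distinct heads. If
`G - S` is properly `2`-coloured, at most `|S|` of these edges have their tail in `S`, and for
each colour the edges whose tail has that colour form a matching: the head of such an edge lies
in `S` or has the other colour, so it is not the tail of another one. Hence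
`rank H ≤ 2 m(G) + |S|`.
-/

open Function Equiv

namespace Matrix

variable {K m n : Type*} [Field K] [Fintype m] [Fintype n]

theorem exists_injective_det_submatrix_ne_zero (A : Matrix m n K) :
    ∃ (f : Fin A.rank → m) (g : Fin A.rank → n),
      Injective f ∧ Injective g ∧ (A.submatrix f g).det ≠ 0 := by
  classical
  obtain ⟨κ, a, ha, hspan_a, hli_a⟩ := exists_linearIndependent' K A.row
  let B := A.submatrix a id
  obtain ⟨ι, b, hb, hspan_b, hli_b⟩ := exists_linearIndependent' K B.col
  let C := B.submatrix id b
  have : Fintype κ := Fintype.ofInjective a ha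
  have : Fintype ι := Fintype.ofInjective b hb
  have hB : B.rank = A.rank := by
    rw [rank_eq_finrank_span_row, rank_eq_finrank_span_row, ← hspan_a]
    rfl
  have hC : C.rank = B.rank := by
    rw [rank_eq_finrank_span_cols, rank_eq_finrank_span_cols, ← hspan_b]
    rfl
  have hκ : Fintype.card κ = A.rank := by
    rw [← hB, LinearIndependent.rank_matrix (M := B) hli_a]
  have hι : Fintype.card ι = Fintype.card κ := by
    rw [← LinearIndependent.rank_matrix (M := Cᵀ) hli_b, rank_transpose, hC, hB, hκ]
  let eκ : Fin A.rank ≃ κ := (Fintype.equivFinOfCardEq hκ).symm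
  let e : κ ≃ ι := Fintype.equivOfCardEq hι.symm
  have hunit : IsUnit (C.submatrix id e) := by
    rw [← linearIndependent_cols_iff_isUnit]
    exact hli_b.comp e e.injective
  refine ⟨a ∘ eκ, b ∘ e ∘ eκ, ha.comp eκ.injective, hb.comp (e.injective.comp eκ.injective), ?_⟩
  have hdet := ((isUnit_iff_isUnit_det _).mp hunit).ne_zero
  rwa [← (C.submatrix id e).det_submatrix_equiv_self eκ] at hdet

theorem exists_perm_apply_ne_zero_of_det_ne_zero [DecidableEq n] {A : Matrix n n K}
    (h : A.det ≠ 0) : ∃ σ : Perm n, ∀ i, A (σ i) i ≠ 0 := by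
  contrapose! h
  rw [det_apply]
  refine Finset.sum_eq_zero fun σ _ => ?_
  obtain ⟨i, hi⟩ := h σ
  rw [Finset.prod_eq_zero (f := fun j => A (σ j) j) (Finset.mem_univ i) hi, smul_zero]

theorem exists_injective_apply_ne_zero (A : Matrix m n K) :
    ∃ (f : Fin A.rank → m) (g : Fin A.rank → n),
      Injective f ∧ Injective g ∧ ∀ i, A (f i) (g i) ≠ 0 := by
  obtain ⟨f, g, hf, hg, hdet⟩ := A.exists_injective_det_submatrix_ne_zero
  obtain ⟨σ, hσ⟩ := exists_perm_apply_ne_zero_of_det_ne_zero hdet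
  exact ⟨f ∘ σ, g, hf.comp σ.injective, hg, hσ⟩

end Matrix

theorem Equiv.Perm.sign_eq_neg_one_pow_of_involutive {ν : Type*} [Fintype ν] [DecidableEq ν]
    {σ : Perm ν} (hσ : Involutive σ) (hfix : ∀ i, σ i ≠ i) :
    Perm.sign σ = (-1) ^ (Fintype.card ν / 2) := by
  rw [Perm.sign_of_pow_two_eq_one (Equiv.ext fun i => hσ i)]
  have : IsEmpty (fixedPoints σ) := ⟨fun ⟨i, hi⟩ => hfix i hi⟩
  simp

namespace SimpleGraph

theorem IsAcyclic.involutive_of_forall_adj {ν : Type*} [Finite ν] {F : SimpleGraph ν}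
    (hF : F.IsAcyclic) {σ : Perm ν} (hσ : ∀ i, F.Adj i (σ i)) : Involutive σ := by
  intro i
  by_contra h2
  set k := minimalPeriod σ i
  have hk0 : 0 < k := minimalPeriod_pos_of_mem_periodicPts (σ.injective.mem_periodicPts i)
  have hper : σ^[k] i = i := iterate_minimalPeriod
  have hk1 : k ≠ 1 := fun h => (hσ i).ne (by rw [h] at hper; exact hper.symm)
  have hk2 : k ≠ 2 := fun h => h2 (by rw [h] at hper; exact hper)
  have hstep : ∀ a b : Fin k, ((a - b : Fin k) : ℕ) = 1 → σ^[a] i = σ (σ^[b] i) := by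
    intro a b hab
    rw [Fin.val_sub] at hab
    calc σ^[a] i = σ^[k + a] i := by
          rw [← iterate_mod_minimalPeriod_eq (n := k + a)]
          show σ^[a] i = σ^[(k + a) % k] i
          rw [Nat.add_mod_left, Nat.mod_eq_of_lt a.2]
      _ = σ^[b] (σ^[k - b + a] i) := by rw [← iterate_add_apply]; congr 1; omega
      _ = σ (σ^[b] i) := by
          rw [← iterate_mod_minimalPeriod_eq (n := k - b + a)]
          show σ^[b] (σ^[(k - b + a) % k] i) = _
          rw [hab]
          exact iterate_succ_apply' σ b i
  -- the orbit of `i` would be a copy of the `k`-cycle in `F`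
  apply isAcyclic_iff_free_cycleGraph.mp hF k (by omega)
  refine ⟨⟨⟨fun j => σ^[j] i, fun {a b} hab => ?_⟩, fun a b hab => ?_⟩⟩
  · rcases cycleGraph_adj'.mp hab with h | h
    · rw [hstep a b h]
      exact (hσ _).symm
    · rw [hstep b a h]
      exact hσ _
  · exact Fin.ext (iterate_injOn_Iio_minimalPeriod a.2 b.2 hab)

variable {V : Type*} {G : SimpleGraph V}

theorem Subgraph.IsMatching.ncard_verts [Finite V] {M : G.Subgraph} (hM : M.IsMatching) :
    M.verts.ncard = 2 * M.edgeSet.ncard := by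
  have hfiber : ∀ e : M.edgeSet, Nat.card {v // hM.toEdge v = e} = 2 := by
    rintro ⟨e, he⟩
    induction e with
    | _ u w =>
      change Nat.card (hM.toEdge ⁻¹' {⟨s(u, w), he⟩}) = 2
      rw [Nat.card_coe_set_eq, hM.toEdge_preimage_singleton he, Set.ncard_pair]
      exact fun h => he.ne (congrArg Subtype.val h)
  rw [← Nat.card_coe_set_eq, ← Nat.card_coe_set_eq M.edgeSet,
    ← Nat.card_congr (Equiv.sigmaFiberEquiv hM.toEdge)]
  have := Fintype.ofFinite M.edgeSet
  rw [Nat.card_sigma]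
  simp [hfiber, mul_comm]

theorem Subgraph.IsMatching.exists_perm_adj {M : G.Subgraph} (hM : M.IsMatching) :
    ∃ τ : Perm M.verts, ∀ v : M.verts, M.Adj v (τ v) := by
  choose f hf huniq using fun v : M.verts => hM v.2
  let τ : M.verts → M.verts := fun v => ⟨f v, (hf v).snd_mem⟩
  have hτ : Involutive τ := fun v => Subtype.ext (huniq _ v (hf v).symm).symm
  exact ⟨hτ.toPerm, hf⟩

theorem bddAbove_matchNum [Finite V] (G : SimpleGraph V) :
    BddAbove {n : ℕ | ∃ M : G.Subgraph, M.IsMatching ∧ M.edgeSet.ncard = n} := by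
  refine ⟨Nat.card (Sym2 V), ?_⟩
  rintro _ ⟨M, -, rfl⟩
  exact Set.ncard_le_card _

theorem Subgraph.IsMatching.ncard_edgeSet_le_matchNum [Finite V] {M : G.Subgraph}
    (hM : M.IsMatching) : M.edgeSet.ncard ≤ matchNum G :=
  le_csSup (bddAbove_matchNum G) ⟨M, hM, rfl⟩

theorem exists_isMatching_ncard_edgeSet_eq_matchNum [Finite V] (G : SimpleGraph V) :
    ∃ M : G.Subgraph, M.IsMatching ∧ M.edgeSet.ncard = matchNum G :=
  Nat.sSup_mem (s := {n | ∃ M : G.Subgraph, M.IsMatching ∧ M.edgeSet.ncard = n})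
    ⟨0, ⊥, fun _ h => h.elim, by simp⟩ (bddAbove_matchNum G)

theorem card_le_matchNum_of_disjoint [Finite V] {ι : Type*} [Fintype ι] {f g : ι → V}
    (hf : Injective f) (hg : Injective g) (hadj : ∀ i, G.Adj (f i) (g i))
    (hdisj : ∀ i j, f i ≠ g j) : Fintype.card ι ≤ matchNum G := by
  have hst : Disjoint (Set.range f) (Set.range g) :=
    Set.disjoint_left.mpr fun _ ⟨i, hi⟩ ⟨j, hj⟩ => hdisj i j (hi.trans hj.symm)
  let e : Set.range f ≃ Set.range g :=
    (Equiv.ofInjective f hf).symm.trans (Equiv.ofInjective g hg)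
  obtain ⟨M, hMverts, hM⟩ :=
    Subgraph.IsMatching.exists_of_disjoint_sets_of_equiv (G := G) hst e fun v => by
      obtain ⟨i, rfl⟩ := (Equiv.ofInjective f hf).surjective v
      simpa [e] using hadj i
  have hverts := hM.ncard_verts
  rw [hMverts, Set.ncard_union_eq hst, Set.ncard_range_of_injective hf,
    Set.ncard_range_of_injective hg, Nat.card_eq_fintype_card] at hverts
  have := hM.ncard_edgeSet_le_matchNum
  omega

theorem card_le_mul_matchNum_add_ncard [Finite V] {S : Set V} {β : Type*} [Fintype β]
    (col : (G.induce Sᶜ).Coloring β) {ι : Type*} [Fintype ι] {f g : ι → V}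
    (hf : Injective f) (hg : Injective g) (hadj : ∀ i, G.Adj (f i) (g i)) :
    Fintype.card ι ≤ Fintype.card β * matchNum G + S.ncard := by
  classical
  let key : ι → Option β := fun i => if h : f i ∈ S then none else some (col ⟨f i, h⟩)
  have hkey_none : ∀ i, key i = none → f i ∈ S := fun i h => by
    by_contra hi
    simp [key, hi] at h
  have hkey_some : ∀ i c, key i = some c → ∃ h : f i ∉ S, col ⟨f i, h⟩ = c := fun i c h => by
    simp only [key] at h
    split_ifs at h with hi
    exact ⟨hi, Option.some_injective _ h⟩
  have hS : Fintype.card {i // key i = none} ≤ S.ncard := by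
    rw [← Nat.card_eq_fintype_card, ← Nat.card_coe_set_eq]
    exact Nat.card_le_card_of_injective (fun i => ⟨f i, hkey_none i i.2⟩)
      fun a b h => Subtype.ext (hf (congrArg Subtype.val h))
  have hclass : ∀ c, Fintype.card {i // key i = some c} ≤ matchNum G := by
    intro c
    refine card_le_matchNum_of_disjoint (f := fun i => f i.1) (g := fun i => g i.1)
      (hf.comp Subtype.val_injective) (hg.comp Subtype.val_injective) (fun i => hadj i.1) ?_
    rintro ⟨i, hi⟩ ⟨j, hj⟩ (hij : f i = g j)
    obtain ⟨hfi, rfl⟩ := hkey_some i _ hi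
    obtain ⟨hfj, hcj⟩ := hkey_some j _ hj
    have hgj : g j ∉ S := hij ▸ hfi
    refine col.valid (v := ⟨f j, hfj⟩) (w := ⟨g j, hgj⟩) (hadj j) ?_
    rw [hcj]
    exact congrArg col (Subtype.ext hij)
  rw [← Fintype.card_congr (Equiv.sigmaFiberEquiv key), Fintype.card_sigma, Fintype.sum_option]
  have := Finset.sum_le_sum fun c (_ : c ∈ Finset.univ) => hclass c
  simp only [Finset.sum_const, Finset.card_univ, smul_eq_mul] at this
  omega

theorem exists_ncard_eq_bipNum (G : SimpleGraph V) :
    ∃ S : Set V, S.ncard = bipNum G ∧ (G.induce Sᶜ).Colorable 2 :=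
  Nat.sInf_mem (s := {n | ∃ S : Set V, S.ncard = n ∧ (G.induce Sᶜ).Colorable 2})
    ⟨_, Set.univ, rfl, by
      have : IsEmpty ↥((Set.univ : Set V)ᶜ) := by simp
      exact .of_isEmpty 2⟩

end SimpleGraph

theorem Matrix.rank_le_mul_matchNum_add_ncard {K V : Type*} [Field K] [Fintype V]
    {G : SimpleGraph V} {A : Matrix V V K} (hA : ∀ i j, A i j ≠ 0 → G.Adj i j) {S : Set V}
    {k : ℕ} (hS : (G.induce Sᶜ).Colorable k) : A.rank ≤ k * matchNum G + S.ncard := by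
  obtain ⟨col⟩ := hS
  obtain ⟨f, g, hf, hg, hfg⟩ := A.exists_injective_apply_ne_zero
  simpa using G.card_le_mul_matchNum_add_ncard col hf hg fun i => hA _ _ (hfg i)

namespace IsUnitGain

variable {V : Type*} {G : SimpleGraph V} {H : Matrix V V ℂ}

theorem adj_of_ne_zero (hH : IsUnitGain G H) {i j : V} (hij : H i j ≠ 0) : G.Adj i j := by
  by_contra h
  exact hij (hH.2.2 i j h)

theorem apply_ne_zero (hH : IsUnitGain G H) {i j : V} (hij : G.Adj i j) : H i j ≠ 0 :=
  norm_ne_zero_iff.mp (by rw [hH.2.1 i j hij]; exact one_ne_zero)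

theorem induce (hH : IsUnitGain G H) (s : Set V) :
    IsUnitGain (G.induce s) (H.submatrix (↑) (↑)) :=
  ⟨hH.1.submatrix _, fun i j h => hH.2.1 i j h, fun i j h => hH.2.2 i j h⟩

theorem prod_apply_perm_eq_one [Fintype V] (hH : IsUnitGain G H) {σ : Perm V}
    (hσ : Involutive σ) (hadj : ∀ i, G.Adj i (σ i)) : ∏ i, H (σ i) i = 1 := by
  refine Finset.prod_involution (fun i _ => σ i) (fun i _ => ?_) (fun i _ _ => (hadj i).ne.symm)
    (fun _ _ => Finset.mem_univ _) (fun i _ => hσ i)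
  rw [hσ i, ← hH.1.apply (σ i) i, Complex.star_def, Complex.conj_mul', hH.2.1 _ _ (hadj i)]
  norm_num

theorem det_ne_zero [Fintype V] [DecidableEq V] (hH : IsUnitGain G H) (hG : G.IsAcyclic)
    {τ : Perm V} (hτ : ∀ i, G.Adj i (τ i)) : H.det ≠ 0 := by
  have hterm : ∀ σ : Perm V, ∏ i, H (σ i) i ≠ 0 →
      Perm.sign σ • ∏ i, H (σ i) i = (-1) ^ (Fintype.card V / 2) := by
    intro σ hσ
    have hadj : ∀ i, G.Adj i (σ i) := fun i =>
      (hH.adj_of_ne_zero (Finset.prod_ne_zero_iff.mp hσ i (Finset.mem_univ i))).symm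
    have hinv := hG.involutive_of_forall_adj hadj
    rw [hH.prod_apply_perm_eq_one hinv hadj,
      Perm.sign_eq_neg_one_pow_of_involutive hinv fun i => (hadj i).ne.symm,
      Units.smul_def, zsmul_eq_mul]
    push_cast
    ring
  rw [Matrix.det_apply, ← Finset.sum_filter_of_ne (p := fun σ => ∏ i, H (σ i) i ≠ 0)
    fun σ _ h hσ => h (by rw [hσ, smul_zero]), Finset.sum_congr rfl fun σ hσ =>
      hterm σ (Finset.mem_filter.mp hσ).2, Finset.sum_const]
  refine smul_ne_zero ?_ (pow_ne_zero _ (by norm_num))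
  exact Finset.card_ne_zero_of_mem (Finset.mem_filter.mpr ⟨Finset.mem_univ τ,
    Finset.prod_ne_zero_iff.mpr fun i _ => hH.apply_ne_zero (hτ i).symm⟩)

theorem two_mul_matchNum_le_rank [Fintype V] (hH : IsUnitGain G H) (hG : G.IsAcyclic) :
    2 * matchNum G ≤ H.rank := by
  classical
  obtain ⟨M, hM, hcard⟩ := G.exists_isMatching_ncard_edgeSet_eq_matchNum
  obtain ⟨τ, hτ⟩ := hM.exists_perm_adj
  have hdet := (hH.induce M.verts).det_ne_zero (hG.induce M.verts) fun v => M.adj_sub (hτ v)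
  have hsub : (H.submatrix (Subtype.val : M.verts → V) (Subtype.val : M.verts → V)).rank ≤
      H.rank :=
    Matrix.rank_submatrix_le _ _ _
  have hverts := hM.ncard_verts
  rw [← Nat.card_coe_set_eq, Nat.card_eq_fintype_card] at hverts
  rw [Matrix.rank_of_det_ne_zero hdet] at hsub
  omega

end IsUnitGain

theorem rank_bounds_acyclic_bipartite_general {V : Type*} [Fintype V]
    (G : SimpleGraph V) (H : Matrix V V ℂ)
    (hH : IsUnitGain G H) :
    (∀ V₀ : Set V, V₀ ≠ Set.univ → (G.induce V₀ᶜ).IsAcyclic →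
        2 * matchNum (G.induce V₀ᶜ) ≤ H.rank) ∧
      H.rank ≤ 2 * matchNum G + bipNum G := by
  classical
  refine ⟨fun V₀ _ hacyc => ?_, ?_⟩
  · exact ((hH.induce V₀ᶜ).two_mul_matchNum_le_rank hacyc).trans (Matrix.rank_submatrix_le _ _ _)
  · obtain ⟨S, hS, hcol⟩ := G.exists_ncard_eq_bipNum
    simpa [hS] using Matrix.rank_le_mul_matchNum_add_ncard (fun _ _ => hH.adj_of_ne_zero) hcol

/-- **Theorem.** For a connected complex unit gain graph `(G, H)`:
for every proper vertex subset `V₀` with `G - V₀` acyclic,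
`2m(G - V₀) ≤ rank(H)`; and `rank(H) ≤ 2m(G) + b(G)`. -/
theorem rank_bounds_acyclic_bipartite {V : Type*} [Fintype V]
    (G : SimpleGraph V) (H : Matrix V V ℂ)
    (hH : IsUnitGain G H) (hG : G.Connected) :
    (∀ V₀ : Set V, V₀ ≠ Set.univ → (G.induce V₀ᶜ).IsAcyclic →
        2 * matchNum (G.induce V₀ᶜ) ≤ H.rank) ∧
      H.rank ≤ 2 * matchNum G + bipNum G :=
  rank_bounds_acyclic_bipartite_general G H hH
end

section
/- Let (G, H) be a complex unit gain graph whose underlying graph G is connected, has no vertex of degree 1, and has cyclomatic number c(G) ≥ 2. Then rank(H) < 2m(G) + c(G). -/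
/-!
Since `rank H ≤ |V|`, it suffices that `G` has a matching missing at most `c(G) - 1` vertices.
More generally, a connected graph with `p` pendant vertices and at least two vertices has a
matching missing at most `max (p + c - 1) 1` vertices; this goes by induction on the edges. A tree
has a matching covering every vertex of degree at least two and one prescribed leaf, so it misses at
most `p - 1` vertices. Otherwise delete an edge of a cycle, at a vertex of degree at least three if
the cycle has one: `c` drops by one and `p` grows by at most one. If every vertex of the cycle has
degree two, then `G` is that cycle, with `p = 0` and `c = 1`.
-/

namespace SimpleGraph

variable {V : Type*}

theorem ncard_neighborSet_eq_degree (G : SimpleGraph V) (v : V) [Fintype (G.neighborSet v)] :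
    (G.neighborSet v).ncard = G.degree v := by
  rw [← card_neighborSet_eq_degree, ← Nat.card_eq_fintype_card, Nat.card_coe_set_eq]

theorem Subgraph.IsMatching.ncard_verts_le [Finite V] {G : SimpleGraph V} {M : G.Subgraph}
    (hM : M.IsMatching) : M.verts.ncard ≤ 2 * M.edgeSet.ncard := by
  have hfin := M.edgeSet.toFinite
  calc M.verts.ncard = (⋃ e ∈ hfin.toFinset, (e : Set V)).ncard := by
        rw [hM.verts_eq_biUnion_edgeSet]; simp
    _ ≤ ∑ e ∈ hfin.toFinset, (e : Set V).ncard := Finset.set_ncard_biUnion_le _ _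
    _ ≤ ∑ _e ∈ hfin.toFinset, 2 := Finset.sum_le_sum fun e _ => by
        induction e using Sym2.ind with
        | _ a b => simpa using Set.ncard_insert_le a {b}
    _ = 2 * M.edgeSet.ncard := by
        rw [Finset.sum_const, smul_eq_mul, mul_comm, Set.ncard_eq_toFinset_card _ hfin]

section Forest

variable {F : SimpleGraph V} {s u : V}

theorem mem_support_deleteIncidenceSet_deleteIncidenceSet {x : V} :
    x ∈ ((F.deleteIncidenceSet s).deleteIncidenceSet u).support ↔
      x ≠ s ∧ x ≠ u ∧ ∃ y, y ≠ s ∧ y ≠ u ∧ F.Adj x y := by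
  simp only [mem_support, deleteIncidenceSet_adj]
  grind

theorem IsAcyclic.not_reachable_of_adj_of_adj (hF : F.IsAcyclic) (hsu : F.Adj s u)
    {x y a b : V} (hx : x = s ∨ x = u) (hy : y = s ∨ y = u) (ha : a ≠ s ∧ a ≠ u)
    (hb : b ≠ s ∧ b ≠ u) (hxa : F.Adj x a) (hyb : F.Adj y b) (hne : s(x, a) ≠ s(y, b)) :
    ¬ ((F.deleteIncidenceSet s).deleteIncidenceSet u).Reachable a b := by
  intro hab
  have hle : (F.deleteIncidenceSet s).deleteIncidenceSet u ≤ F.deleteEdges {s(x, a)} := by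
    intro p q h
    simp only [deleteIncidenceSet_adj] at h
    refine deleteEdges_adj.mpr ⟨h.1.1, ?_⟩
    rw [Set.mem_singleton_iff, Sym2.eq_iff]
    grind
  have hsu' : (F.deleteEdges {s(x, a)}).Adj s u := by
    refine deleteEdges_adj.mpr ⟨hsu, ?_⟩
    rw [Set.mem_singleton_iff, Sym2.eq_iff]
    grind
  have hyx : (F.deleteEdges {s(x, a)}).Reachable y x := by
    rcases hx with rfl | rfl <;> rcases hy with rfl | rfl
    exacts [.rfl, hsu'.reachable.symm, hsu'.reachable, .rfl]
  have hby : (F.deleteEdges {s(x, a)}).Adj b y :=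
    deleteEdges_adj.mpr ⟨hyb.symm, by rw [Set.mem_singleton_iff, Sym2.eq_swap]; exact hne.symm⟩
  exact isAcyclic_iff_forall_adj_isBridge.mp hF hxa
    ((hab.mono hle).trans (hby.reachable.trans hyx)).symm

theorem IsAcyclic.injOn_deleteIncidenceSet_deleteIncidenceSet (hF : F.IsAcyclic) {S : Set V}
    (hSinj : S.InjOn F.connectedComponentMk) (hs : s ∈ S) (hsu : F.Adj s u) :
    ((S ∪ (F.neighborSet s ∪ F.neighborSet u)) ∩
      ((F.deleteIncidenceSet s).deleteIncidenceSet u).support).InjOn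
      ((F.deleteIncidenceSet s).deleteIncidenceSet u).connectedComponentMk := by
  have hle : (F.deleteIncidenceSet s).deleteIncidenceSet u ≤ F :=
    (deleteIncidenceSet_le _ _).trans (deleteIncidenceSet_le _ _)
  rintro a ⟨ha, ha'⟩ b ⟨hb, hb'⟩ hab
  rw [mem_support_deleteIncidenceSet_deleteIncidenceSet] at ha' hb'
  have hr := ConnectedComponent.exact hab
  by_cases hsa : F.Reachable s a
  · have near : ∀ x ∈ S ∪ (F.neighborSet s ∪ F.neighborSet u), x ≠ s → F.Reachable s x →
        ∃ y, (y = s ∨ y = u) ∧ F.Adj y x := by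
      rintro x (hxS | hxs | hxu) hxs' hsx
      · exact absurd (hSinj hs hxS (ConnectedComponent.sound hsx)).symm hxs'
      · exact ⟨s, .inl rfl, hxs⟩
      · exact ⟨u, .inr rfl, hxu⟩
    obtain ⟨x, hx, hxa⟩ := near a ha ha'.1 hsa
    obtain ⟨y, hy, hyb⟩ := near b hb hb'.1 (hsa.trans (hr.mono hle))
    by_contra hne
    refine hF.not_reachable_of_adj_of_adj hsu hx hy ⟨ha'.1, ha'.2.1⟩ ⟨hb'.1, hb'.2.1⟩ hxa hyb
      ?_ hr
    rw [Ne, Sym2.eq_iff]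
    grind
  · have far : ∀ x ∈ S ∪ (F.neighborSet s ∪ F.neighborSet u), ¬ F.Reachable s x → x ∈ S := by
      rintro x (hxS | hxs | hxu) hsx
      exacts [hxS, absurd hxs.reachable hsx, absurd (hsu.reachable.trans hxu.reachable) hsx]
    have hsb : ¬ F.Reachable s b := fun h => hsa (h.trans (hr.mono hle).symm)
    exact hSinj (far a ha hsa) (far b hb hsb) (ConnectedComponent.sound (hr.mono hle))

theorem sdiff_singleton_subset_support_deleteIncidenceSet {S : Set V} (hS : S ⊆ F.support)
    (hSinj : S.InjOn F.connectedComponentMk) (hs : s ∈ S) (hsu : F.Adj s u) :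
    S \ {s} ⊆ ((F.deleteIncidenceSet s).deleteIncidenceSet u).support := by
  rintro t ⟨ht, hts⟩
  have hfar : ¬ F.Reachable s t := fun h => hts (hSinj ht hs (ConnectedComponent.sound h.symm))
  obtain ⟨w, htw⟩ := hS ht
  refine mem_support_deleteIncidenceSet_deleteIncidenceSet.mpr ⟨hts, ?_, w, ?_, ?_, htw⟩
  · rintro rfl
    exact hfar hsu.reachable
  · rintro rfl
    exact hfar htw.reachable.symm
  · rintro rfl
    exact hfar (hsu.reachable.trans htw.reachable.symm)

theorem IsAcyclic.nontrivial_neighborSet_deleteIncidenceSet_or (hF : F.IsAcyclic)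
    (hsu : F.Adj s u) {v : V} (hvs : v ≠ s) (hvu : v ≠ u) (hv : (F.neighborSet v).Nontrivial) :
    (((F.deleteIncidenceSet s).deleteIncidenceSet u).neighborSet v).Nontrivial ∨
      v ∈ (F.neighborSet s ∪ F.neighborSet u) ∩
        ((F.deleteIncidenceSet s).deleteIncidenceSet u).support := by
  obtain ⟨p, hp, q, hq, hpq⟩ := hv
  have hadj : ∀ x y, (x = s ∨ x = u) → F.Adj v x → y ≠ s → y ≠ u → F.Adj v y →
      v ∈ (F.neighborSet s ∪ F.neighborSet u) ∩
        ((F.deleteIncidenceSet s).deleteIncidenceSet u).support := by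
    rintro x y (rfl | rfl) hvx hys hyu hvy <;>
      exact ⟨by simp [hvx.symm], mem_support_deleteIncidenceSet_deleteIncidenceSet.mpr
        ⟨hvs, hvu, y, hys, hyu, hvy⟩⟩
  by_cases hp' : p = s ∨ p = u <;> by_cases hq' : q = s ∨ q = u
  · exact absurd .rfl (hF.not_reachable_of_adj_of_adj hsu hp' hq' ⟨hvs, hvu⟩ ⟨hvs, hvu⟩
      (hp : F.Adj v p).symm (hq : F.Adj v q).symm (by rw [Ne, Sym2.eq_iff]; grind))
  · push Not at hq'
    exact .inr (hadj p q hp' hp hq'.1 hq'.2 hq)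
  · push Not at hp'
    exact .inr (hadj q p hq' hq hp'.1 hp'.2 hp)
  · push Not at hp' hq'
    exact .inl ⟨p, deleteIncidenceSet_adj.mpr ⟨deleteIncidenceSet_adj.mpr ⟨hp, hvs, hp'.1⟩,
      hvu, hp'.2⟩, q, deleteIncidenceSet_adj.mpr ⟨deleteIncidenceSet_adj.mpr ⟨hq, hvs, hq'.1⟩,
      hvu, hq'.2⟩, hpq⟩

/-- Match `s` with `u` and delete all edges at `s` and `u`: the neighbours of `s` and `u` left
with an edge are prescribed, and acyclicity puts them in distinct components. -/
theorem IsAcyclic.exists_isMatching_of_deleteIncidenceSet (hF : F.IsAcyclic) {S : Set V}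
    (hS : S ⊆ F.support) (hSinj : S.InjOn F.connectedComponentMk) (hs : s ∈ S)
    (hsu : F.Adj s u) {M' : ((F.deleteIncidenceSet s).deleteIncidenceSet u).Subgraph}
    (hM' : M'.IsMatching)
    (hM'S : (S ∪ (F.neighborSet s ∪ F.neighborSet u)) ∩
      ((F.deleteIncidenceSet s).deleteIncidenceSet u).support ⊆ M'.verts)
    (hM'nt : {v | (((F.deleteIncidenceSet s).deleteIncidenceSet u).neighborSet v).Nontrivial} ⊆
      M'.verts) :
    ∃ M : F.Subgraph, M.IsMatching ∧ S ⊆ M.verts ∧ {v | (F.neighborSet v).Nontrivial} ⊆ M.verts := by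
  have hle : (F.deleteIncidenceSet s).deleteIncidenceSet u ≤ F :=
    (deleteIncidenceSet_le _ _).trans (deleteIncidenceSet_le _ _)
  have hM'ne : ∀ v ∈ M'.verts, v ≠ s ∧ v ≠ u := fun v hv => by
    obtain ⟨w, hw, -⟩ := hM' hv
    have h := mem_support_deleteIncidenceSet_deleteIncidenceSet.mp ⟨w, M'.adj_sub hw⟩
    exact ⟨h.1, h.2.1⟩
  have hverts : (F.subgraphOfAdj hsu ⊔ M'.map (Hom.ofLE hle)).verts = {s, u} ∪ M'.verts := by
    simp [Subgraph.map_verts]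
  refine ⟨F.subgraphOfAdj hsu ⊔ M'.map (Hom.ofLE hle), ?_, ?_, ?_⟩
  · refine (Subgraph.IsMatching.subgraphOfAdj hsu).sup (hM'.map_ofLE hle) ?_
    rw [(Subgraph.IsMatching.subgraphOfAdj hsu).support_eq_verts,
      (hM'.map_ofLE hle).support_eq_verts]
    simp only [subgraphOfAdj_verts, Subgraph.map_verts, Hom.coe_ofLE, Set.image_id,
      Set.disjoint_left]
    rintro v (rfl | rfl) hv
    exacts [(hM'ne _ hv).1 rfl, (hM'ne _ hv).2 rfl]
  · intro t ht
    rw [hverts]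
    by_cases hts : t = s
    · exact .inl (.inl hts)
    exact .inr (hM'S ⟨.inl ht,
      sdiff_singleton_subset_support_deleteIncidenceSet hS hSinj hs hsu ⟨ht, hts⟩⟩)
  · intro v hv
    rw [hverts]
    by_cases hv' : v = s ∨ v = u
    · exact .inl hv'
    push Not at hv'
    rcases hF.nontrivial_neighborSet_deleteIncidenceSet_or hsu hv'.1 hv'.2 hv with h | h
    exacts [.inr (hM'nt h), .inr (hM'S ⟨.inr h.1, h.2⟩)]

theorem IsAcyclic.exists_isMatching_superset [Finite V] (hF : F.IsAcyclic) {S : Set V}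
    (hS : S ⊆ F.support) (hSinj : S.InjOn F.connectedComponentMk) :
    ∃ M : F.Subgraph, M.IsMatching ∧ S ⊆ M.verts ∧ {v | (F.neighborSet v).Nontrivial} ⊆ M.verts := by
  induction F using WellFoundedLT.induction generalizing S with
  | _ F ih =>
  have key : ∀ S : Set V, S ⊆ F.support → S.InjOn F.connectedComponentMk → ∀ s ∈ S,
      ∃ M : F.Subgraph, M.IsMatching ∧ S ⊆ M.verts ∧
        {v | (F.neighborSet v).Nontrivial} ⊆ M.verts := by
    intro S hS hSinj s hs
    obtain ⟨u, hsu⟩ := hS hs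
    have hle : (F.deleteIncidenceSet s).deleteIncidenceSet u ≤ F :=
      (deleteIncidenceSet_le _ _).trans (deleteIncidenceSet_le _ _)
    have hlt : (F.deleteIncidenceSet s).deleteIncidenceSet u < F :=
      lt_of_le_of_ne hle fun h => by
        have := h ▸ hsu
        simp [deleteIncidenceSet_adj] at this
    obtain ⟨M', hM', hM'S, hM'nt⟩ := ih _ hlt (hF.anti hle) Set.inter_subset_right
      (hF.injOn_deleteIncidenceSet_deleteIncidenceSet hSinj hs hsu)
    exact hF.exists_isMatching_of_deleteIncidenceSet hS hSinj hs hsu hM' hM'S hM'nt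
  rcases S.eq_empty_or_nonempty with rfl | ⟨s, hs⟩
  · rcases F.support.eq_empty_or_nonempty with h | ⟨s, hs⟩
    · refine ⟨⊥, fun v hv => hv.elim, Set.empty_subset _, fun v ⟨w, hw, _⟩ => ?_⟩
      exact (Set.eq_empty_iff_forall_notMem.mp h v ⟨w, hw⟩).elim
    · obtain ⟨M, hM, -, hMnt⟩ := key {s} (Set.singleton_subset_iff.mpr hs)
        (Set.injOn_singleton _ _) s rfl
      exact ⟨M, hM, Set.empty_subset _, hMnt⟩
  · exact key S hS hSinj s hs

end Forest

def pendantVerts (G : SimpleGraph V) : Set V := {v | (G.neighborSet v).ncard = 1}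

theorem IsTree.exists_isMatching_ncard_pendantVerts [Finite V] [Nontrivial V]
    {T : SimpleGraph V} (hT : T.IsTree) :
    ∃ M : T.Subgraph, M.IsMatching ∧ Nat.card V + 1 ≤ M.verts.ncard + (pendantVerts T).ncard := by
  have := Fintype.ofFinite V
  classical
  obtain ⟨v₀, hv₀⟩ := hT.exists_vert_degree_one_of_nontrivial
  rw [← ncard_neighborSet_eq_degree] at hv₀
  obtain ⟨w₀, hw₀⟩ := Set.ncard_eq_one.mp hv₀
  obtain ⟨M, hM, hMv₀, hMnt⟩ := hT.isAcyclic.exists_isMatching_superset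
    (S := {v₀}) (by simp [mem_support, ← mem_neighborSet, hw₀]) (Set.injOn_singleton _ _)
  have hcompl : M.vertsᶜ ⊆ pendantVerts T \ {v₀} := by
    intro v hv
    have hne : (T.neighborSet v).Nonempty := hT.connected.preconnected.exists_adj_of_nontrivial v
    have hsub : (T.neighborSet v).Subsingleton := Set.not_nontrivial_iff.mp fun h => hv (hMnt h)
    refine ⟨Set.ncard_eq_one.mpr ⟨hne.some, hsub.eq_singleton_of_mem hne.some_mem⟩, ?_⟩
    rintro rfl
    exact hv (hMv₀ rfl)
  have h1 := Set.ncard_add_ncard_compl M.verts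
  have h2 := Set.ncard_le_ncard hcompl
  have h3 := Set.ncard_sdiff_singleton_add_one (show v₀ ∈ pendantVerts T from hv₀)
  exact ⟨M, hM, by omega⟩

section DeleteEdge

variable {G : SimpleGraph V} {v q : V}

theorem neighborSet_deleteEdges_of_ne {x : V} (hxv : x ≠ v) (hxq : x ≠ q) :
    (G.deleteEdges {s(v, q)}).neighborSet x = G.neighborSet x := by
  ext y
  simp only [mem_neighborSet, deleteEdges_adj, Set.mem_singleton_iff, Sym2.eq_iff]
  grind

theorem neighborSet_deleteEdges_left :
    (G.deleteEdges {s(v, q)}).neighborSet v = G.neighborSet v \ {q} := by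
  ext y
  simp only [mem_neighborSet, deleteEdges_adj, Set.mem_singleton_iff, Sym2.eq_iff, Set.mem_sdiff]
  grind [G.loopless.irrefl]

theorem pendantVerts_deleteEdges_subset :
    pendantVerts (G.deleteEdges {s(v, q)}) ⊆ pendantVerts G ∪ {v, q} := by
  intro x hx
  by_cases hxvq : x = v ∨ x = q
  · rcases hxvq with rfl | rfl <;> simp
  push Not at hxvq
  left
  rwa [pendantVerts, Set.mem_ofPred_eq, neighborSet_deleteEdges_of_ne hxvq.1 hxvq.2] at hx

theorem pendantVerts_deleteEdges_subset_of_three_le [Finite V] (hvq : G.Adj v q)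
    (hv : 3 ≤ (G.neighborSet v).ncard) :
    pendantVerts (G.deleteEdges {s(v, q)}) ⊆ pendantVerts G ∪ {q} := by
  intro x hx
  rcases pendantVerts_deleteEdges_subset hx with hx' | rfl | rfl
  · exact .inl hx'
  · have : (G.neighborSet x \ {q}).ncard = 1 := by
      rwa [pendantVerts, Set.mem_ofPred_eq, neighborSet_deleteEdges_left] at hx
    rw [Set.ncard_sdiff_singleton_of_mem (show q ∈ G.neighborSet x from hvq)] at this
    omega
  · exact .inr rfl

end DeleteEdge

theorem ncard_edgeSet_eq_of_forall_ncard_neighborSet_eq_two [Finite V] {G : SimpleGraph V}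
    (h : ∀ v, (G.neighborSet v).ncard = 2) : G.edgeSet.ncard = Nat.card V := by
  have := Fintype.ofFinite V
  classical
  have hsum := G.sum_degrees_eq_twice_card_edges
  simp only [← ncard_neighborSet_eq_degree, h, Finset.sum_const, Finset.card_univ,
    smul_eq_mul] at hsum
  rw [← coe_edgeFinset, Set.ncard_coe_finset, Nat.card_eq_fintype_card]
  omega

theorem Connected.ncard_neighborSet_eq_two_of_isCycle [Finite V] {G : SimpleGraph V}
    (hG : G.Connected) {w : V} {c : G.Walk w w} (hc : c.IsCycle)
    (h : ∀ x ∈ c.support, (G.neighborSet x).ncard < 3) (v : V) :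
    (G.neighborSet v).ncard = 2 := by
  have hnbr : ∀ x ∈ c.support, c.toSubgraph.neighborSet x = G.neighborSet x := fun x hx =>
    Set.eq_of_subset_of_ncard_le (c.toSubgraph.neighborSet_subset x)
      (by have := h x hx; rw [hc.ncard_neighborSet_toSubgraph_eq_two hx]; omega)
  have hclosed : ∀ {x y : V} (p : G.Walk x y), x ∈ c.support → y ∈ c.support := by
    intro x y p
    induction p with
    | nil => exact id
    | @cons a b _ hab _ ih =>
      intro ha
      have hab' : b ∈ c.toSubgraph.neighborSet a := (hnbr a ha).symm ▸ hab
      exact ih (c.mem_verts_toSubgraph.mp (c.toSubgraph.edge_vert hab'.symm))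
  have hv : v ∈ c.support := hclosed (hG.preconnected w v).some c.start_mem_support
  rw [← hnbr v hv, hc.ncard_neighborSet_toSubgraph_eq_two hv]

theorem Connected.exists_deleteEdges_of_not_isAcyclic [Finite V] {G : SimpleGraph V}
    (hG : G.Connected) (hacyc : ¬ G.IsAcyclic) :
    ∃ e ∈ G.edgeSet, (G.deleteEdges {e}).Connected ∧
      (pendantVerts (G.deleteEdges {e})).ncard + (G.deleteEdges {e}).edgeSet.ncard ≤
        max ((pendantVerts G).ncard + G.edgeSet.ncard) (Nat.card V + 1) := by
  obtain ⟨w, c, hc⟩ : ∃ (w : V) (c : G.Walk w w), c.IsCycle := by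
    simpa [IsAcyclic] using hacyc
  obtain ⟨v, hv, hv3⟩ : ∃ v ∈ c.support,
      (∃ x ∈ c.support, 3 ≤ (G.neighborSet x).ncard) → 3 ≤ (G.neighborSet v).ncard := by
    by_cases h : ∃ x ∈ c.support, 3 ≤ (G.neighborSet x).ncard
    · obtain ⟨x, hx, hx3⟩ := h
      exact ⟨x, hx, fun _ => hx3⟩
    · exact ⟨w, c.start_mem_support, fun h' => absurd h' h⟩
  obtain ⟨q, hq⟩ : (c.toSubgraph.neighborSet v).Nonempty :=
    Set.nonempty_of_ncard_ne_zero (by rw [hc.ncard_neighborSet_toSubgraph_eq_two hv]; omega)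
  have he : s(v, q) ∈ c.edges := Walk.adj_toSubgraph_iff_mem_edges.mp hq
  have hvq : G.Adj v q := c.adj_of_mem_edges he
  refine ⟨s(v, q), hvq, hG.connected_delete_edge_of_not_isBridge fun hb =>
    (isBridge_iff_forall_cycle_notMem hvq).mp hb c hc he, ?_⟩
  have hE : (G.deleteEdges {s(v, q)}).edgeSet.ncard + 1 = G.edgeSet.ncard := by
    rw [edgeSet_deleteEdges, Set.ncard_sdiff_singleton_add_one (show s(v, q) ∈ G.edgeSet from hvq)]
  by_cases h3 : ∃ x ∈ c.support, 3 ≤ (G.neighborSet x).ncard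
  · have hP := Set.ncard_le_ncard (pendantVerts_deleteEdges_subset_of_three_le hvq (hv3 h3))
    have := Set.ncard_union_le (pendantVerts G) {q}
    rw [Set.ncard_singleton] at this
    omega
  · push Not at h3
    have h2 := hG.ncard_neighborSet_eq_two_of_isCycle hc h3
    have hP : pendantVerts G = ∅ := Set.eq_empty_of_forall_notMem fun x (hx : _ = 1) => by
      have := h2 x
      omega
    have hP' := Set.ncard_le_ncard (pendantVerts_deleteEdges_subset (G := G) (v := v) (q := q))
    rw [hP, Set.empty_union] at hP'
    have := Set.ncard_insert_le v {q}
    rw [Set.ncard_singleton] at this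
    have hEV := ncard_edgeSet_eq_of_forall_ncard_neighborSet_eq_two h2
    omega

/-- `M` misses at most `max (p + c - 1) 1` vertices, where `p` counts the pendant vertices and
`c = |E| - |V| + 1`; the bound is rearranged to avoid subtraction. -/
theorem Connected.exists_isMatching_le [Finite V] [Nontrivial V] {G : SimpleGraph V}
    (hG : G.Connected) :
    ∃ M : G.Subgraph, M.IsMatching ∧
      2 * Nat.card V ≤ M.verts.ncard + max ((pendantVerts G).ncard + G.edgeSet.ncard)
        (Nat.card V + 1) := by
  induction G using WellFoundedLT.induction with
  | _ G ih =>
  by_cases hacyc : G.IsAcyclic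
  · obtain ⟨M, hM, hle⟩ := IsTree.exists_isMatching_ncard_pendantVerts ⟨hG, hacyc⟩
    have hE := (isTree_iff_connected_and_card.mp ⟨hG, hacyc⟩).2
    rw [Nat.card_coe_set_eq] at hE
    exact ⟨M, hM, by omega⟩
  obtain ⟨e, he, hG', hle⟩ := hG.exists_deleteEdges_of_not_isAcyclic hacyc
  have hlt : G.deleteEdges {e} < G := lt_of_le_of_ne (deleteEdges_le _) fun h => by
    rw [← h, edgeSet_deleteEdges] at he
    exact he.2 rfl
  obtain ⟨M, hM, hM'⟩ := ih _ hlt hG'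
  refine ⟨M.map (Hom.ofLE (deleteEdges_le _)), hM.map_ofLE _, ?_⟩
  simp only [Subgraph.map_verts, Hom.coe_ofLE, Set.image_id]
  omega

theorem Connected.cycNum_eq {G : SimpleGraph V} (hG : G.Connected) :
    cycNum G = G.edgeSet.ncard - Nat.card V + 1 := by
  have := hG.preconnected.subsingleton_connectedComponent
  have : Nonempty G.ConnectedComponent := hG.nonempty.map G.connectedComponentMk
  rw [cycNum, (Nat.card_eq_one_iff_unique (α := G.ConnectedComponent)).mpr
    ⟨inferInstance, inferInstance⟩, Nat.cast_one]

theorem Subgraph.IsMatching.ncard_verts_le_two_mul_matchNum [Finite V] {G : SimpleGraph V}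
    {M : G.Subgraph} (hM : M.IsMatching) : M.verts.ncard ≤ 2 * matchNum G := by
  have hbdd : BddAbove {n | ∃ M : G.Subgraph, M.IsMatching ∧ M.edgeSet.ncard = n} :=
    ⟨G.edgeSet.ncard, by
      rintro _ ⟨M', -, rfl⟩
      exact Set.ncard_le_ncard M'.edgeSet_subset⟩
  have := le_csSup hbdd ⟨M, hM, rfl⟩
  have := hM.ncard_verts_le
  unfold matchNum
  omega

end SimpleGraph

theorem not_upper_optimal_of_no_pendant_general {V : Type*} [Fintype V]
    (G : SimpleGraph V) [DecidableRel G.Adj] (H : Matrix V V ℂ)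
    (hG : G.Connected)
    (hpend : ∀ v : V, G.degree v ≠ 1) (hc : 2 ≤ cycNum G) :
    (H.rank : ℤ) < 2 * (matchNum G : ℤ) + cycNum G := by
  rw [hG.cycNum_eq] at hc ⊢
  obtain ⟨e, he⟩ := Set.nonempty_of_ncard_ne_zero (s := G.edgeSet) (by omega)
  induction e using Sym2.ind with
  | _ a b =>
  have : Nontrivial V := ⟨a, b, G.ne_of_adj he⟩
  have hP : G.pendantVerts = ∅ := Set.eq_empty_of_forall_notMem fun v hv =>
    hpend v ((G.ncard_neighborSet_eq_degree v).symm.trans hv)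
  obtain ⟨M, hM, hle⟩ := hG.exists_isMatching_le
  rw [hP, Set.ncard_empty, zero_add] at hle
  have hM2 := hM.ncard_verts_le_two_mul_matchNum
  have hrank : H.rank ≤ Nat.card V := Nat.card_eq_fintype_card (α := V) ▸ H.rank_le_card_width
  omega

/-- **Lemma.** If the underlying graph of a complex unit gain graph `(G, H)` is
connected, has no vertex of degree 1 and has cyclomatic number at least 2, then
`rank(H) < 2m(G) + c(G)`. -/
theorem not_upper_optimal_of_no_pendant {V : Type*} [Fintype V]
    (G : SimpleGraph V) [DecidableRel G.Adj] (H : Matrix V V ℂ)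
    (hH : IsUnitGain G H) (hG : G.Connected)
    (hpend : ∀ v : V, G.degree v ≠ 1) (hc : 2 ≤ cycNum G) :
    (H.rank : ℤ) < 2 * (matchNum G : ℤ) + cycNum G :=
  not_upper_optimal_of_no_pendant_general G H hG hpend hc
end
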